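/- arXiv:1711.05252 — 4 statements merged into one kernel-verified Lean document; each statement's English description precedes it below -/
import Mathlib

section
/- Let p be a prime number and let A be a commutative ring in which every integer prime to p is invertible (a ℤ_(p)-algebra). Let (A, I, γ) and (B, J, η) be commutative rings equipped with divided power structures γ on the ideal I and η on the ideal J, and let φ : A → B be a ring homomorphism with φ(I) ⊆ J. Let T ⊆ I be a set generating the ideal I. Then φ is a homomorphism of divided power rings (i.e. η_n(φ(x)) = φ(γ_n(x)) for all n ≥ 0 and all x ∈ I) if and only if η_p(φ(t)) = φ(γ_p(t)) for all t ∈ T. -/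
universe u v

/-!
Whenever `n !` is invertible in `B`, multiplying by `n !` turns both `η_n(φ x)` and `φ(γ_n x)`
into `(φ x)^n`; so `φ` commutes with the divided powers of order `< p` for free. Given this, the
elements `x ∈ I` with `η_p(φ x) = φ(γ_p x)` form an ideal, since the expansion of `γ_p(x + y)`
involves only orders `≤ p`; hence it contains `span T = I`. Every order `n ≥ p` is then reached by
strong induction: if `n = q p`, use `γ_q(γ_p x) = uniformBell q p · γ_n(x)`, and otherwise, with
`r = n % p`, use `γ_r(x) γ_{n-r}(x) = (n choose r) · γ_n(x)`. By Lucas' theorem neither coefficient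
is divisible by `p`, so both are units in `B` and cancel.
-/

namespace Nat.Prime

variable {p : ℕ}

theorem not_dvd_choose_mod (hp : p.Prime) (n : ℕ) : ¬ p ∣ n.choose (n % p) := by
  have := Fact.mk hp
  have hlucas := Choose.choose_modEq_choose_mod_mul_choose_div_nat (p := p) (n := n) (k := n % p)
  rw [Nat.mod_mod, Nat.div_eq_of_lt (Nat.mod_lt n hp.pos), Nat.choose_self, Nat.choose_zero_right,
    mul_one, Nat.ModEq, Nat.mod_eq_of_lt hp.one_lt] at hlucas
  rw [Nat.dvd_iff_mod_eq_zero, hlucas]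
  exact one_ne_zero

theorem not_dvd_uniformBell (hp : p.Prime) (m : ℕ) : ¬ p ∣ m.uniformBell p := by
  induction m with
  | zero => exact Nat.uniformBell_zero_left p ▸ hp.not_dvd_one
  | succ m ih =>
    have hmod : (m * p + p - 1) % p = p - 1 := by
      rw [Nat.add_sub_assoc hp.one_le, mul_comm, Nat.mul_add_mod,
        Nat.mod_eq_of_lt (Nat.sub_lt hp.pos one_pos)]
    rw [Nat.uniformBell_succ_left, hp.prime.dvd_mul, not_or]
    exact ⟨hmod ▸ hp.not_dvd_choose_mod _, ih⟩

end Nat.Prime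

theorem RingHom.eq_map_of_isUnit_natCast_mul {A B : Type*} [Semiring A] [Semiring B]
    (φ : A →+* B) {c : ℕ} (hc : IsUnit (c : B)) {a : A} {b : B}
    (h : (c : B) * b = φ (c * a)) : b = φ a := by
  rw [map_mul, map_natCast] at h
  exact hc.mul_left_cancel h

namespace DividedPowers

variable {A B : Type*} [CommSemiring A] [CommSemiring B] {I : Ideal A} {J : Ideal B}
  (γ : DividedPowers I) (η : DividedPowers J) (φ : A →+* B)

theorem dpow_map_eq_of_isUnit_factorial {n : ℕ} {x : A} (hx : x ∈ I) (hφx : φ x ∈ J)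
    (hn : IsUnit (n.factorial : B)) : η.dpow n (φ x) = φ (γ.dpow n x) :=
  φ.eq_map_of_isUnit_natCast_mul hn <| by
    rw [η.factorial_mul_dpow_eq_pow hφx, γ.factorial_mul_dpow_eq_pow hx, map_pow]

theorem dpow_map_eq_add_of_isUnit_choose {m n : ℕ} {x : A} (hx : x ∈ I) (hφx : φ x ∈ J)
    (hc : IsUnit ((m + n).choose m : B))
    (hm : η.dpow m (φ x) = φ (γ.dpow m x)) (hn : η.dpow n (φ x) = φ (γ.dpow n x)) :
    η.dpow (m + n) (φ x) = φ (γ.dpow (m + n) x) :=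
  φ.eq_map_of_isUnit_natCast_mul hc <| by
    rw [← η.mul_dpow hφx, ← γ.mul_dpow hx, map_mul, hm, hn]

theorem dpow_map_eq_mul_of_isUnit_uniformBell {m n : ℕ} (hn0 : n ≠ 0) {x : A} (hx : x ∈ I)
    (hφx : φ x ∈ J)
    (hc : IsUnit (m.uniformBell n : B)) (hn : η.dpow n (φ x) = φ (γ.dpow n x))
    (hm : η.dpow m (φ (γ.dpow n x)) = φ (γ.dpow m (γ.dpow n x))) :
    η.dpow (m * n) (φ x) = φ (γ.dpow (m * n) x) :=
  φ.eq_map_of_isUnit_natCast_mul hc <| by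
    rw [← η.dpow_comp hn0 hφx, ← γ.dpow_comp hn0 hx, hn, hm]

theorem dpow_map_zero (hφ : ∀ x ∈ I, φ x ∈ J) (n : ℕ) :
    η.dpow n (φ 0) = φ (γ.dpow n 0) := by
  rcases eq_or_ne n 0 with rfl | hn
  · rw [η.dpow_zero (hφ 0 I.zero_mem), γ.dpow_zero I.zero_mem, map_one]
  · rw [map_zero, η.dpow_eval_zero hn, γ.dpow_eval_zero hn, map_zero]

theorem dpow_map_eq_of_span_eq (hφ : ∀ x ∈ I, φ x ∈ J) {T : Set A} (hT : Ideal.span T = I)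
    {n : ℕ} (hlt : ∀ k < n, ∀ x ∈ I, η.dpow k (φ x) = φ (γ.dpow k x))
    (hTn : ∀ t ∈ T, η.dpow n (φ t) = φ (γ.dpow n t)) :
    ∀ x ∈ I, η.dpow n (φ x) = φ (γ.dpow n x) := by
  have hle : ∀ x ∈ I, η.dpow n (φ x) = φ (γ.dpow n x) →
      ∀ k ≤ n, η.dpow k (φ x) = φ (γ.dpow k x) := fun x hx hxn k hk =>
    hk.lt_or_eq.elim (hlt k · x hx) (· ▸ hxn)
  intro x hx
  rw [← hT] at hx
  induction hx using Submodule.span_induction with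
  | mem t ht => exact hTn t ht
  | zero => exact γ.dpow_map_zero η φ hφ n
  | add x y hx hy hxn hyn =>
    replace hx : x ∈ I := hT ▸ hx
    replace hy : y ∈ I := hT ▸ hy
    rw [map_add, η.dpow_add (hφ x hx) (hφ y hy), γ.dpow_add hx hy, map_sum]
    refine Finset.sum_congr rfl fun k hk => ?_
    rw [Finset.HasAntidiagonal.mem_antidiagonal] at hk
    rw [map_mul, hle x hx hxn k.1 (by omega), hle y hy hyn k.2 (by omega)]
  | smul a x hx hxn =>
    replace hx : x ∈ I := hT ▸ hx
    rw [smul_eq_mul, map_mul, η.dpow_mul (hφ x hx), γ.dpow_mul hx, map_mul, map_pow, hxn]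

variable {p : ℕ}

theorem dpow_map_eq_of_lt_prime (hp : p.Prime) (hB : ∀ c : ℕ, ¬ p ∣ c → IsUnit (c : B))
    {n : ℕ} (hn : n < p) {x : A} (hx : x ∈ I) (hφx : φ x ∈ J) :
    η.dpow n (φ x) = φ (γ.dpow n x) :=
  γ.dpow_map_eq_of_isUnit_factorial η φ hx hφx <| hB _ fun h => (hp.dvd_factorial.mp h).not_gt hn

theorem dpow_map_eq_of_dpow_prime_eq (hp : p.Prime) (hφ : ∀ x ∈ I, φ x ∈ J)
    (hB : ∀ c : ℕ, ¬ p ∣ c → IsUnit (c : B))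
    (hpI : ∀ x ∈ I, η.dpow p (φ x) = φ (γ.dpow p x)) (n : ℕ) :
    ∀ x ∈ I, η.dpow n (φ x) = φ (γ.dpow n x) := by
  induction n using Nat.strong_induction_on with | _ n ih => ?_
  intro x hx
  rcases lt_or_ge n p with hnp | hpn
  · exact γ.dpow_map_eq_of_lt_prime η φ hp hB hnp hx (hφ x hx)
  by_cases hdvd : p ∣ n
  · obtain ⟨q, rfl⟩ := hdvd
    have hq0 : q ≠ 0 := by
      rintro rfl
      exact hp.ne_zero (Nat.le_zero.mp (mul_zero p ▸ hpn))
    have hq : q < p * q := lt_mul_left (Nat.pos_of_ne_zero hq0) hp.one_lt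
    rw [mul_comm p q]
    exact γ.dpow_map_eq_mul_of_isUnit_uniformBell η φ hp.ne_zero hx (hφ x hx)
      (hB _ (hp.not_dvd_uniformBell q)) (hpI x hx) (ih q hq _ (γ.dpow_mem hp.ne_zero hx))
  · have hr : 0 < n % p := Nat.pos_of_ne_zero fun h => hdvd (Nat.dvd_of_mod_eq_zero h)
    have hrn : n % p < n := (Nat.mod_lt n hp.pos).trans_le hpn
    have hc := hB _ (hp.not_dvd_choose_mod n)
    generalize n % p = r at hr hrn hc
    have hsplit : r + (n - r) = n := by omega
    rw [← hsplit] at hc ⊢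
    exact γ.dpow_map_eq_add_of_isUnit_choose η φ hx (hφ x hx) hc (ih _ hrn x hx)
      (ih _ (by omega) x hx)

end DividedPowers

theorem isDPMorphism_iff_on_generators_general (p : ℕ) (hp : p.Prime)
    {A : Type u} {B : Type v} [CommRing A] [CommRing B]
    (hA : ∀ m : ℤ, IsCoprime m (p : ℤ) → IsUnit (m : A))
    {I : Ideal A} {J : Ideal B} (γ : DividedPowers I) (η : DividedPowers J)
    (φ : A →+* B) (hφ : ∀ x ∈ I, φ x ∈ J)
    (T : Set A) (hT : Ideal.span T = I) :
    (∀ (n : ℕ), ∀ x ∈ I, η.dpow n (φ x) = φ (γ.dpow n x)) ↔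
      (∀ t ∈ T, η.dpow p (φ t) = φ (γ.dpow p t)) := by
  refine ⟨fun h t ht => h p t (hT ▸ Ideal.subset_span ht), fun hTp => ?_⟩
  have hB : ∀ c : ℕ, ¬ p ∣ c → IsUnit (c : B) := fun c hc => by
    have hcop : IsCoprime (c : ℤ) p :=
      Nat.isCoprime_iff_coprime.mpr (Nat.coprime_comm.mp (hp.coprime_iff_not_dvd.mpr hc))
    simpa using (hA c hcop).map φ
  have hpI := γ.dpow_map_eq_of_span_eq η φ hφ hT
    (fun k hk x hx => γ.dpow_map_eq_of_lt_prime η φ hp hB hk hx (hφ x hx)) hTp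
  exact γ.dpow_map_eq_of_dpow_prime_eq η φ hp hφ hB hpI

/-- **Langer, Corollary 1.5.** Let `p` be a prime and let `A` be a `ℤ_(p)`-algebra (every
integer prime to `p` is invertible in `A`). Let `(A, I, γ)` and `(B, J, η)` be divided power
rings and `φ : A → B` a ring homomorphism with `φ(I) ⊆ J`. Let `T ⊆ I` generate the ideal
`I`. Then `φ` is a homomorphism of divided power rings if and only if
`η_p(φ(t)) = φ(γ_p(t))` for all `t ∈ T`. -/
theorem isDPMorphism_iff_on_generators (p : ℕ) (hp : p.Prime)
    {A : Type u} {B : Type v} [CommRing A] [CommRing B]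
    (hA : ∀ m : ℤ, IsCoprime m (p : ℤ) → IsUnit (m : A))
    {I : Ideal A} {J : Ideal B} (γ : DividedPowers I) (η : DividedPowers J)
    (φ : A →+* B) (hφ : ∀ x ∈ I, φ x ∈ J)
    (T : Set A) (hTI : T ⊆ I) (hT : Ideal.span T = I) :
    (∀ (n : ℕ), ∀ x ∈ I, η.dpow n (φ x) = φ (γ.dpow n x)) ↔
      (∀ t ∈ T, η.dpow p (φ t) = φ (γ.dpow p t)) :=
  isDPMorphism_iff_on_generators_general p hp hA γ η φ hφ T hT
end

section
/- Let k be a field of characteristic p > 0 and let 2 ≤ i_j ≤ p for j = 1, ..., n. Let A = k[x₁, ..., xₙ]/(x₁^{i₁}, ..., xₙ^{iₙ}) with its unique divided power structure γ on the ideal I_A = (x₁, ..., xₙ)A satisfying γ_p(xᵢ) = 0 for all i, and let B = k[y_{l,j} : 1 ≤ l ≤ n, 1 ≤ j ≤ i_l − 1]/(y_{l,j}² : all l, j) with its unique divided power structure δ on the ideal I_B generated by all y_{l,j} satisfying δ_p(y_{l,j}) = 0 for all l, j. Then the k-algebra homomorphism φ : A → B determined by x_l ↦ ∑_{j=1}^{i_l−1}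 y_{l,j} is well-defined, injective, satisfies φ(I_A) ⊆ I_B, and is a homomorphism of divided power rings (A, I_A, γ) → (B, I_B, δ). -/
/-!
The map sends `x_l` to `z_l = ∑_j y_{l,j}`. As the `y_{l,j}` square to zero, `z_l ^ m = 0` for
`m ≥ i_l` and `z_l ^ (i_l - 1) = (i_l - 1)! ∏_j y_{l,j}`. Hence `φ` is well defined and maps the
socle generator `∏_l x_l ^ (i_l - 1)` of `A` to a unit times `∏ y_{l,j} ≠ 0`; since every nonzero
element of `A` has a monomial multiple that is a nonzero multiple of this generator, `φ` is
injective.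

Compatibility with divided powers only has to be checked on the generators `x_l`. Below `p` both
sides are `x ^ m / m!`. From `p` on both vanish: in characteristic `p`, `γ_p x = 0` forces
`γ_m x = 0` for all `m ≥ p` (the coefficients relating `γ_m x` to `γ_{q}(γ_p x)` are prime to `p`
by Lucas' theorem), and `δ_p z_l = 0` because a sum of fewer than `p` elements whose divided powers
of order `≥ 2` vanish has no nonzero divided power of order `p`.
-/

open Finset MvPolynomial

universe u

section SquareZero

open scoped Nat

variable {R : Type*} [CommSemiring R] {ι : Type*}

theorem sum_pow_eq_zero_of_sq_eq_zero {s : Finset ι} {y : ι → R} (hy : ∀ j ∈ s, y j ^ 2 = 0)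
    {m : ℕ} (hm : #s < m) : (∑ j ∈ s, y j) ^ m = 0 := by
  classical
  induction s using Finset.induction_on generalizing m with
  | empty => rw [sum_empty, zero_pow (by simp at hm; omega)]
  | insert a s ha ih =>
    rw [card_insert_of_notMem ha] at hm
    rw [sum_insert ha]
    exact (Commute.all _ _).add_pow_eq_zero_of_add_le_succ_of_pow_eq_zero
      (hy a (mem_insert_self a s))
      (ih (fun j hj => hy j (mem_insert_of_mem hj)) (Nat.lt_succ_self _)) (by omega)

theorem add_pow_succ_of_sq_eq_zero {a : R} (ha : a ^ 2 = 0) (b : R) (n : ℕ) :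
    (a + b) ^ (n + 1) = b ^ (n + 1) + (n + 1) * a * b ^ n := by
  induction n with
  | zero => simp [add_comm]
  | succ n ih =>
    calc (a + b) ^ (n + 1 + 1)
        = b ^ (n + 2) + (n + 2) * a * b ^ (n + 1) + (n + 1) * a ^ 2 * b ^ n := by
          rw [pow_succ, ih]; ring
      _ = b ^ (n + 1 + 1) + (↑(n + 1) + 1) * a * b ^ (n + 1) := by rw [ha]; push_cast; ring

theorem sum_pow_card_of_sq_eq_zero {s : Finset ι} {y : ι → R} (hy : ∀ j ∈ s, y j ^ 2 = 0) :
    (∑ j ∈ s, y j) ^ #s = (#s)! * ∏ j ∈ s, y j := by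
  classical
  induction s using Finset.induction_on with
  | empty => simp
  | insert a s ha ih =>
    have hs : ∀ j ∈ s, y j ^ 2 = 0 := fun j hj => hy j (mem_insert_of_mem hj)
    rw [sum_insert ha, prod_insert ha, card_insert_of_notMem ha,
      add_pow_succ_of_sq_eq_zero (hy a (mem_insert_self a s)),
      sum_pow_eq_zero_of_sq_eq_zero hs (Nat.lt_succ_self _), ih hs, Nat.factorial_succ]
    push_cast
    ring

end SquareZero

namespace MvPolynomial

variable {σ R : Type*}

theorem mem_span_X_pow_iff [CommSemiring R] {c : σ → ℕ} {f : MvPolynomial σ R} :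
    f ∈ Ideal.span (Set.range fun l => (X l : MvPolynomial σ R) ^ c l) ↔
      ∀ d ∈ f.support, ∃ l, c l ≤ d l := by
  have hgen : Set.range (fun l => (X l : MvPolynomial σ R) ^ c l) =
      (fun d => monomial d (1 : R)) '' Set.range fun l => Finsupp.single l (c l) := by
    rw [← Set.range_comp]
    simp only [Function.comp_def, X_pow_eq_monomial]
  simp [hgen, mem_ideal_span_monomial_image, Finsupp.single_le_iff]

theorem exists_monomial_mul_sub_monomial_mem_span_X_pow [CommRing R] {c : σ → ℕ} {top : σ →₀ ℕ}
    (htop : ∀ l, top l + 1 = c l) {f : MvPolynomial σ R}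
    (hf : f ∉ Ideal.span (Set.range fun l => (X l : MvPolynomial σ R) ^ c l)) :
    ∃ e : σ →₀ ℕ, ∃ r ≠ 0, monomial e 1 * f - monomial top r ∈
      Ideal.span (Set.range fun l => (X l : MvPolynomial σ R) ^ c l) := by
  classical
  rw [mem_span_X_pow_iff] at hf
  push Not at hf
  -- multiplying by `X ^ (top - a)` for a minimal surviving exponent `a` kills all other terms
  obtain ⟨a, ⟨haf, hac⟩, hmin⟩ :=
    exists_minimal_of_wellFoundedLT (fun d => d ∈ f.support ∧ ∀ l, d l < c l) hf
  have hatop : a ≤ top := fun l => by have := hac l; have := htop l; omega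
  refine ⟨top - a, coeff a f, mem_support_iff.mp haf, mem_span_X_pow_iff.mpr fun d hd => ?_⟩
  rw [mem_support_iff, coeff_sub, coeff_monomial_mul', coeff_monomial] at hd
  by_cases hdtop : top = d
  · subst hdtop
    simp [tsub_tsub_cancel_of_le hatop] at hd
  rw [if_neg hdtop, sub_zero, ite_ne_right_iff, one_mul] at hd
  obtain ⟨hle, hd⟩ := hd
  set b := d - (top - a)
  have hdb : d = top - a + b := (add_tsub_cancel_of_le hle).symm
  have hbf : b ∈ f.support := mem_support_iff.mpr hd
  by_cases hbc : ∀ l, b l < c l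
  · obtain ⟨l, hl⟩ : ∃ l, a l < b l := by
      by_contra! hba
      apply hdtop
      rw [hdb, le_antisymm hba (hmin ⟨hbf, hbc⟩ hba), tsub_add_cancel_of_le hatop]
    refine ⟨l, ?_⟩
    rw [hdb, Finsupp.add_apply, Finsupp.tsub_apply, ← htop l]
    omega
  · push Not at hbc
    obtain ⟨l, hl⟩ := hbc
    exact ⟨l, by rw [hdb, Finsupp.add_apply]; omega⟩

theorem C_mul_prod_X_notMem_span_X_sq [CommSemiring R] [Fintype σ] {r : R} (hr : r ≠ 0) :
    C r * ∏ s, (X s : MvPolynomial σ R) ∉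
      Ideal.span (Set.range fun s => (X s : MvPolynomial σ R) ^ 2) := by
  classical
  change C r * ∏ s, monomial (Finsupp.single s 1) 1 ∉ _
  rw [mem_span_X_pow_iff (c := fun _ => 2), ← monomial_sum_index]
  push Not
  refine ⟨∑ s, Finsupp.single s 1, by simp [support_monomial, hr], fun s => ?_⟩
  simp [Finsupp.finsetSum_apply]

section BlockSum

open scoped Nat

variable {σ : Type*} (κ : σ → Type*) [∀ l, Fintype (κ l)] (R : Type*) [CommRing R]

noncomputable def blockSumHom : MvPolynomial σ R →ₐ[R] MvPolynomial (Σ l, κ l) R :=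
  aeval fun l => ∑ j, X ⟨l, j⟩

variable {κ R}

theorem blockSumHom_X (l : σ) : blockSumHom κ R (X l) = ∑ j, X ⟨l, j⟩ :=
  aeval_X _ _

variable {J : Ideal (MvPolynomial (Σ l, κ l) R)}

theorem blockSumHom_X_pow_card_succ_mem (hJ : ∀ s, X s ^ 2 ∈ J) (l : σ) :
    blockSumHom κ R (X l ^ (Fintype.card (κ l) + 1)) ∈ J := by
  rw [← Ideal.Quotient.eq_zero_iff_mem, map_pow, blockSumHom_X, map_pow, map_sum]
  refine sum_pow_eq_zero_of_sq_eq_zero (fun j _ => ?_) (by simp)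
  rw [← map_pow, Ideal.Quotient.eq_zero_iff_mem]
  exact hJ _

theorem mk_blockSumHom_monomial [Fintype σ] (hJ : ∀ s, X s ^ 2 ∈ J) (r : R) :
    Ideal.Quotient.mk J
        (blockSumHom κ R (monomial (Finsupp.equivFunOnFinite.symm fun l => Fintype.card (κ l)) r)) =
      Ideal.Quotient.mk J (C (r * ∏ l, ((Fintype.card (κ l))! : R)) * ∏ s, X s) := by
  have hsum (l : σ) : (∑ j, Ideal.Quotient.mk J (X ⟨l, j⟩)) ^ Fintype.card (κ l) =
      ((Fintype.card (κ l))! : MvPolynomial _ R ⧸ J) * ∏ j, Ideal.Quotient.mk J (X ⟨l, j⟩) := by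
    refine (sum_pow_card_of_sq_eq_zero fun j _ => ?_).trans (by rw [card_univ])
    rw [← map_pow, Ideal.Quotient.eq_zero_iff_mem]
    exact hJ _
  rw [blockSumHom, aeval_monomial, Finsupp.prod_fintype _ _ (fun _ => pow_zero _)]
  simp only [Finsupp.coe_equivFunOnFinite_symm, map_mul, map_prod, map_pow, map_sum, hsum,
    prod_mul_distrib, Fintype.prod_sigma, algebraMap_eq, map_natCast]
  ring

theorem comap_blockSumHom_span_X_sq [Fintype σ]
    (hκ : ∀ l, IsUnit ((Fintype.card (κ l))! : R)) :
    (Ideal.span (Set.range fun s => (X s : MvPolynomial (Σ l, κ l) R) ^ 2)).comap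
        (blockSumHom κ R) =
      Ideal.span (Set.range fun l => X l ^ (Fintype.card (κ l) + 1)) := by
  have hJ (s : Σ l, κ l) : (X s : MvPolynomial (Σ l, κ l) R) ^ 2 ∈
      Ideal.span (Set.range fun s => X s ^ 2) := Ideal.subset_span ⟨s, rfl⟩
  have hle : Ideal.span (Set.range fun l => X l ^ (Fintype.card (κ l) + 1)) ≤
      (Ideal.span (Set.range fun s => X s ^ 2)).comap (blockSumHom κ R) :=
    Ideal.span_le.mpr fun _ ⟨l, hl⟩ => hl ▸ blockSumHom_X_pow_card_succ_mem hJ l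
  refine le_antisymm (fun f hf => ?_) hle
  by_contra hfK
  obtain ⟨e, r, hr, hmem⟩ := exists_monomial_mul_sub_monomial_mem_span_X_pow
    (top := Finsupp.equivFunOnFinite.symm fun l => Fintype.card (κ l)) (fun _ => by simp) hfK
  have hmon : blockSumHom κ R (monomial (Finsupp.equivFunOnFinite.symm fun l =>
      Fintype.card (κ l)) r) ∈ Ideal.span (Set.range fun s => X s ^ 2) := by
    have h := Ideal.sub_mem _ (Ideal.mul_mem_left _ (monomial e 1) hf) (hle hmem)
    rwa [sub_sub_cancel] at h
  rw [← Ideal.Quotient.eq_zero_iff_mem, mk_blockSumHom_monomial hJ,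
    Ideal.Quotient.eq_zero_iff_mem] at hmon
  refine C_mul_prod_X_notMem_span_X_sq ?_ hmon
  exact (IsUnit.mul_left_eq_zero (IsUnit.prod_iff.mpr fun l _ => hκ l)).not.mpr hr

end BlockSum

end MvPolynomial

theorem Nat.Prime.not_dvd_choose_add_mul {p : ℕ} (hp : p.Prime) {r : ℕ} (hr : r < p) (q : ℕ) :
    ¬ p ∣ (r + q * p).choose r := by
  have : Fact p.Prime := ⟨hp⟩
  have hlucas := Choose.choose_modEq_choose_mod_mul_choose_div_nat (p := p) (n := r + q * p)
    (k := r)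
  rw [Nat.add_mul_mod_self_right, Nat.add_mul_div_right _ _ hp.pos, Nat.mod_eq_of_lt hr,
    Nat.div_eq_of_lt hr, zero_add, Nat.choose_self, Nat.choose_zero_right, one_mul] at hlucas
  rw [Nat.dvd_iff_mod_eq_zero, hlucas, Nat.mod_eq_of_lt hp.one_lt]
  exact one_ne_zero

theorem Nat.Prime.not_dvd_uniformBell_s6 {p : ℕ} (hp : p.Prime) (q : ℕ) : ¬ p ∣ q.uniformBell p := by
  induction q with
  | zero => simpa [Nat.uniformBell_zero_left] using hp.one_lt.ne'
  | succ q ih =>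
    have hidx : q * p + p - 1 = p - 1 + q * p := by have := hp.one_le; omega
    rw [Nat.uniformBell_succ_left, hp.dvd_mul, not_or, hidx]
    exact ⟨hp.not_dvd_choose_add_mul (Nat.sub_lt hp.pos one_pos) q, ih⟩

section CharP

open scoped Nat

variable {p : ℕ} {A : Type*} [CommSemiring A]

theorem isUnit_natCast_of_not_dvd (k : Type*) [Field k] [CharP k p] [Algebra k A] {c : ℕ}
    (hc : ¬ p ∣ c) : IsUnit (c : A) := by
  have hck : (c : k) ≠ 0 := by rwa [Ne, CharP.cast_eq_zero_iff k p]
  simpa using hck.isUnit.map (algebraMap k A)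

theorem isUnit_factorial_of_lt (k : Type*) [Field k] [CharP k p] [Algebra k A] (hp : p.Prime)
    {m : ℕ} (hm : m < p) : IsUnit (m ! : A) :=
  isUnit_natCast_of_not_dvd k (by rw [hp.dvd_factorial]; omega)

namespace DividedPowers

variable {I : Ideal A} (hI : DividedPowers I) {x : A}

theorem dpow_sum_eq_zero_of_card_lt {ι : Type*} {s : Finset ι} {y : ι → A}
    (hy : ∀ j ∈ s, y j ∈ I) (hy2 : ∀ j ∈ s, ∀ m, 2 ≤ m → hI.dpow m (y j) = 0) {m : ℕ}
    (hm : #s < m) : hI.dpow m (∑ j ∈ s, y j) = 0 := by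
  classical
  induction s using Finset.induction_on generalizing m with
  | empty => rw [sum_empty, hI.dpow_eval_zero (by simp at hm; omega)]
  | insert a s ha ih =>
    rw [card_insert_of_notMem ha] at hm
    rw [sum_insert ha, hI.dpow_add (hy a (mem_insert_self a s))
      (I.sum_mem fun j hj => hy j (mem_insert_of_mem hj))]
    refine sum_eq_zero fun ⟨u, v⟩ huv => ?_
    rw [HasAntidiagonal.mem_antidiagonal] at huv
    rcases lt_or_ge u 2 with hu | hu
    · rw [ih (fun j hj => hy j (mem_insert_of_mem hj)) (fun j hj => hy2 j (mem_insert_of_mem hj))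
        (by omega), mul_zero]
    · rw [hy2 a (mem_insert_self a s) u hu, zero_mul]

theorem dpow_map_of_isUnit_factorial {B : Type*} [CommSemiring B] {J : Ideal B}
    (hJ : DividedPowers J) (f : A →+* B) (hx : x ∈ I) (hfx : f x ∈ J) {m : ℕ}
    (hm : IsUnit (m ! : A)) : hJ.dpow m (f x) = f (hI.dpow m x) := by
  have hmB : IsUnit (m ! : B) := by simpa using hm.map f
  apply hmB.mul_left_cancel
  rw [hJ.factorial_mul_dpow_eq_pow hfx, ← map_natCast f, ← map_mul,
    hI.factorial_mul_dpow_eq_pow hx, map_pow]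

theorem dpow_eq_zero_of_prime_le (k : Type*) [Field k] [CharP k p] [Algebra k A] (hp : p.Prime)
    (hx : x ∈ I) (hpx : hI.dpow p x = 0) {m : ℕ} (hm : p ≤ m) : hI.dpow m x = 0 := by
  obtain ⟨q, r, hr, rfl⟩ : ∃ q r, r < p ∧ m = r + (q + 1) * p :=
    ⟨m / p - 1, m % p, Nat.mod_lt _ hp.pos, by
      rw [Nat.sub_add_cancel (Nat.div_pos hm hp.pos), Nat.mod_add_div']⟩
  have hqp : hI.dpow ((q + 1) * p) x = 0 := by
    have h := hI.dpow_comp (m := q + 1) hp.ne_zero hx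
    rwa [hpx, hI.dpow_eval_zero q.succ_ne_zero, eq_comm,
      (isUnit_natCast_of_not_dvd k (hp.not_dvd_uniformBell_s6 _)).mul_right_eq_zero] at h
  have h := hI.mul_dpow (m := r) (n := (q + 1) * p) hx
  rwa [hqp, mul_zero, eq_comm,
    (isUnit_natCast_of_not_dvd k (hp.not_dvd_choose_add_mul hr _)).mul_right_eq_zero] at h

theorem dpow_eq_zero_of_sq_eq_zero (k : Type*) [Field k] [CharP k p] [Algebra k A] (hp : p.Prime)
    (hx : x ∈ I) (hx2 : x ^ 2 = 0) (hpx : hI.dpow p x = 0) {m : ℕ} (hm : 2 ≤ m) :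
    hI.dpow m x = 0 := by
  rcases lt_or_ge m p with hmp | hmp
  · rw [← (isUnit_factorial_of_lt k hp hmp).mul_right_eq_zero, hI.factorial_mul_dpow_eq_pow hx,
      pow_eq_zero_of_le hm hx2]
  · exact hI.dpow_eq_zero_of_prime_le k hp hx hpx hmp

theorem dpow_prime_sum_eq_zero_of_sq_eq_zero (k : Type*) [Field k] [CharP k p] [Algebra k A]
    (hp : p.Prime) {ι : Type*} {s : Finset ι} {y : ι → A} (hy : ∀ j ∈ s, y j ∈ I)
    (hy2 : ∀ j ∈ s, y j ^ 2 = 0) (hpy : ∀ j ∈ s, hI.dpow p (y j) = 0) (hs : #s < p) :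
    hI.dpow p (∑ j ∈ s, y j) = 0 :=
  hI.dpow_sum_eq_zero_of_card_lt hy (fun j hj _ hm =>
    hI.dpow_eq_zero_of_sq_eq_zero k hp (hy j hj) (hy2 j hj) (hpy j hj) hm) hs

theorem dpow_map_of_dpow_prime_eq_zero (k : Type*) [Field k] [CharP k p] [Algebra k A]
    {B : Type*} [CommSemiring B] [Algebra k B] {J : Ideal B} (hJ : DividedPowers J) (hp : p.Prime)
    (f : A →+* B) (hx : x ∈ I) (hfx : f x ∈ J) (hpx : hI.dpow p x = 0)
    (hpfx : hJ.dpow p (f x) = 0) (m : ℕ) : hJ.dpow m (f x) = f (hI.dpow m x) := by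
  rcases lt_or_ge m p with hmp | hmp
  · exact hI.dpow_map_of_isUnit_factorial hJ f hx hfx (isUnit_factorial_of_lt k hp hmp)
  · rw [hI.dpow_eq_zero_of_prime_le k hp hx hpx hmp,
      hJ.dpow_eq_zero_of_prime_le k hp hfx hpfx hmp, map_zero]

end DividedPowers

end CharP

/-- **Langer, Proposition 2.3.** Let `k` be a field of characteristic `p > 0` and
`2 ≤ i_l ≤ p`. Let `A = k[x₁, ..., xₙ]/(x₁^{i₁}, ..., xₙ^{iₙ})` with its unique divided
power structure `γ` on `I_A = (x₁, ..., xₙ)` satisfying `γ_p(x_l) = 0`, and let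
`B = k[y_{l,j}]/(y_{l,j}²)` with its unique divided power structure `δ` on the ideal `I_B`
generated by the `y_{l,j}` satisfying `δ_p(y_{l,j}) = 0`. Then the `k`-algebra homomorphism
`φ : A → B` determined by `x_l ↦ ∑_j y_{l,j}` is well defined, injective, maps `I_A` into
`I_B`, and is a homomorphism of divided power rings. -/
theorem dpMorphism_sum_of_squares (p : ℕ) (hp : p.Prime)
    {k : Type u} [Field k] [CharP k p]
    (n : ℕ) (i : Fin n → ℕ) (hi : ∀ l, 2 ≤ i l ∧ i l ≤ p)
    (KA : Ideal (MvPolynomial (Fin n) k))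
    (hKA : KA = Ideal.span (Set.range fun l => MvPolynomial.X l ^ i l))
    (KB : Ideal (MvPolynomial ((l : Fin n) × Fin (i l - 1)) k))
    (hKB : KB = Ideal.span (Set.range fun s => MvPolynomial.X s ^ 2))
    (IA : Ideal (MvPolynomial (Fin n) k ⧸ KA))
    (hIA : IA = Ideal.span (Set.range fun l => Ideal.Quotient.mk KA (MvPolynomial.X l)))
    (IB : Ideal (MvPolynomial ((l : Fin n) × Fin (i l - 1)) k ⧸ KB))
    (hIB : IB = Ideal.span (Set.range fun s => Ideal.Quotient.mk KB (MvPolynomial.X s)))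
    (γ : DividedPowers IA)
    (hγ : ∀ l, γ.dpow p (Ideal.Quotient.mk KA (MvPolynomial.X l)) = 0)
    (δ : DividedPowers IB)
    (hδ : ∀ s, δ.dpow p (Ideal.Quotient.mk KB (MvPolynomial.X s)) = 0) :
    ∃ φ : (MvPolynomial (Fin n) k ⧸ KA) →ₐ[k] (MvPolynomial ((l : Fin n) × Fin (i l - 1)) k ⧸ KB),
      (∀ l, φ (Ideal.Quotient.mk KA (MvPolynomial.X l)) =
        ∑ j : Fin (i l - 1), Ideal.Quotient.mk KB (MvPolynomial.X ⟨l, j⟩)) ∧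
      Function.Injective φ ∧
      (∀ x ∈ IA, φ x ∈ IB) ∧
      ∀ (m : ℕ), ∀ x ∈ IA, δ.dpow m (φ x) = φ (γ.dpow m x) := by
  have hcomap : KB.comap (blockSumHom (fun l => Fin (i l - 1)) k) = KA := by
    rw [hKB, hKA, comap_blockSumHom_span_X_sq fun l =>
      isUnit_factorial_of_lt k hp (by rw [Fintype.card_fin]; have := hi l; omega)]
    congr! with l
    rw [Fintype.card_fin]
    have := hi l
    omega
  let φ := Ideal.quotientMapₐ KB _ hcomap.ge
  have hφX (l : Fin n) :
      φ (Ideal.Quotient.mk KA (X l)) = ∑ j, Ideal.Quotient.mk KB (X ⟨l, j⟩) := by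
    simp [φ, blockSumHom_X]
  have hY (s : (l : Fin n) × Fin (i l - 1)) : Ideal.Quotient.mk KB (X s) ∈ IB :=
    hIB ▸ Ideal.subset_span ⟨s, rfl⟩
  have hY2 (s : (l : Fin n) × Fin (i l - 1)) : Ideal.Quotient.mk KB (X s) ^ 2 = 0 := by
    rw [← map_pow, Ideal.Quotient.eq_zero_iff_mem, hKB]
    exact Ideal.subset_span ⟨s, rfl⟩
  have hφX_mem (l : Fin n) : φ (Ideal.Quotient.mk KA (X l)) ∈ IB :=
    hφX l ▸ IB.sum_mem fun j _ => hY _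
  have hφX_dpow (l : Fin n) : δ.dpow p (φ (Ideal.Quotient.mk KA (X l))) = 0 :=
    hφX l ▸ δ.dpow_prime_sum_eq_zero_of_sq_eq_zero k hp (fun _ _ => hY _) (fun _ _ => hY2 _)
      (fun _ _ => hδ _) (by rw [card_univ, Fintype.card_fin]; have := hi l; omega)
  have hdp := DividedPowers.IsDPMorphism.on_span γ δ (f := (φ : _ →+* _)) hIA
    (by rintro _ ⟨l, rfl⟩; exact hφX_mem l)
    (by rintro m _ ⟨l, rfl⟩
        exact (γ.dpow_map_of_dpow_prime_eq_zero k δ hp _ (hIA ▸ Ideal.subset_span ⟨l, rfl⟩)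
          (hφX_mem l) (hγ l) (hφX_dpow l) m).symm)
  exact ⟨φ, hφX, Ideal.quotientMap_injective' (H := hcomap.ge) hcomap.le,
    fun x hx => hdp.ideal_comp (Ideal.mem_map_of_mem _ hx), fun m x hx => hdp.dpow_comp x hx⟩
end

section
/- Let p be a prime, q = p^r with r ≥ 1, and let (R, m_R) be a local commutative ring with residue field k of characteristic p such that pR ≠ 0, p·m_R = 0, and m_R^{e+1} = 0 for some 1 ≤ e ≤ q − 1. Let i₁, ..., iₙ be positive integers with i_j ≤ q for all j, let I be an ideal of k[x₁, ..., xₙ], and let f₀ ∈ I be a polynomial such that for every multi-index (l₁, ..., lₙ) of a monomial occurring (with nonzero coefficient) in f₀ one has ⌊q·l₁/i₁⌋ + ⋯ + ⌊q·lₙ/iₙ⌋ ≥ e + 1. Set A₀ = k[x₁, ..., xₙ]/((x₁^{i₁}, ..., xₙ^{iₙ}) + I). If A₀ is liftable to the canonical projection R → k = R/m_R, then w_p(f₀^{p^{r−1}}) ∈ (x₁^{i₁}, ..., xₙ^{iₙ}) + I. -/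
open scoped TensorProduct Classical

universe u v w

/-- A `k`-algebra `A₀` is liftable to a surjection `π : R → k` if there is a flat
`R`-algebra `A` together with a `k`-algebra isomorphism `k ⊗_R A ≅ A₀`. -/
def IsLiftable {R : Type u} {k : Type v} [CommRing R] [CommRing k] (π : R →+* k)
    (A₀ : Type w) [CommRing A₀] [Algebra k A₀] : Prop :=
  ∃ (A : Type (max u v w)) (_ : CommRing A) (_ : Algebra R A),
    Module.Flat R A ∧
    (letI : Algebra R k := π.toAlgebra
     Nonempty ((k ⊗[R] A) ≃ₐ[k] A₀))

/-- `wp p f` is the polynomial `w_p(f)` of Langer: writing `f = ∑ᵢ aᵢ x^{Jᵢ}` canonically as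
the sum of its distinct monomial terms, `w_p(f) = ∑_{l₁+⋯+l_m = p, each lⱼ < p}
(1/(l₁!⋯l_m!)) ∏ᵢ (aᵢ x^{Jᵢ})^{lᵢ}`. -/
noncomputable def wp (p : ℕ) [Fact p.Prime] {σ : Type*} {k : Type v} [CommRing k] [CharP k p]
    (f : MvPolynomial σ k) : MvPolynomial σ k :=
  ∑ l ∈ (f.support.piAntidiag p).filter (fun l => ∀ d ∈ f.support, l d < p),
    MvPolynomial.C
      ((ZMod.castHom (dvd_refl p) k) (∏ d ∈ f.support, ((l d).factorial : ZMod p))⁻¹) *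
      ∏ d ∈ f.support, (MvPolynomial.monomial d (f.coeff d)) ^ (l d)

/-!
Lift the variables and the coefficients of `f₀` to a flat lift `A` of `A₀`: this writes a lift
of `f₀` as `F = ∑ t_d` with `F ∈ m_R A` and `t_d ^ q = 0`, because the monomial condition puts
every `x^{q d}` into `m_R^{e+1} A = 0`. As `F ^ q ∈ m_R^q A = 0` and `p² = 0` in `A`, the sum
`H = ∑ t_d ^ (q/p)`, which is congruent to `F ^ (q/p)` modulo `p`, satisfies `H ^ p = 0`. So
`p W = 0` for the `p`-divided cross term `W` of `H ^ p`. Flatness together with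
`Ann_R(p) = m_R` gives `W ∈ m_R A`, hence the image of `W` in `A₀` vanishes; by Wilson's theorem
that image is `-w_p(f₀^{q/p})`.
-/

open Finset MvPolynomial

theorem Nat.Prime.dvd_multinomial {ι : Type*} {p : ℕ} (hp : p.Prime) {s : Finset ι}
    {l : ι → ℕ} (hsum : ∑ d ∈ s, l d = p) (hlt : ∀ d ∈ s, l d < p) :
    p ∣ Nat.multinomial s l := by
  have hspec := Nat.multinomial_spec s l
  rw [hsum] at hspec
  have hfac : ¬ p ∣ ∏ d ∈ s, (l d).factorial := by
    rw [(Nat.prime_iff.mp hp).dvd_finsetProd_iff]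
    rintro ⟨d, hd, hdvd⟩
    exact (hlt d hd).not_ge (hp.dvd_factorial.mp hdvd)
  exact ((Nat.prime_iff.mp hp).dvd_or_dvd (hspec ▸ Nat.dvd_factorial hp.pos le_rfl)).resolve_left
    hfac

theorem Nat.Prime.multinomial_div_mul_prod_factorial {ι : Type*} {p : ℕ} (hp : p.Prime)
    {s : Finset ι} {l : ι → ℕ} (hsum : ∑ d ∈ s, l d = p) (hlt : ∀ d ∈ s, l d < p) :
    Nat.multinomial s l / p * ∏ d ∈ s, (l d).factorial = (p - 1).factorial := by
  obtain ⟨m, hm⟩ := hp.dvd_multinomial hsum hlt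
  have hspec := Nat.multinomial_spec s l
  rw [hsum, hm, ← Nat.mul_factorial_pred hp.ne_zero, mul_left_comm] at hspec
  rw [hm, Nat.mul_div_cancel_left m hp.pos, mul_comm]
  exact Nat.eq_of_mul_eq_mul_left hp.pos hspec

theorem ZMod.natCast_multinomial_div_eq_neg_inv {ι : Type*} {p : ℕ} [Fact p.Prime]
    {s : Finset ι} {l : ι → ℕ} (hsum : ∑ d ∈ s, l d = p) (hlt : ∀ d ∈ s, l d < p) :
    ((Nat.multinomial s l / p : ℕ) : ZMod p) = -(∏ d ∈ s, ((l d).factorial : ZMod p))⁻¹ := by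
  have hp : p.Prime := Fact.out
  have hprod : (∏ d ∈ s, ((l d).factorial : ZMod p)) ≠ 0 := by
    rw [prod_ne_zero_iff]
    intro d hd
    rw [Ne, ZMod.natCast_eq_zero_iff, hp.dvd_factorial]
    exact (hlt d hd).not_ge
  rw [eq_neg_iff_add_eq_zero, ← mul_left_inj' hprod, add_mul, inv_mul_cancel₀ hprod, zero_mul,
    ← Nat.cast_prod, ← Nat.cast_mul, hp.multinomial_div_mul_prod_factorial hsum hlt,
    ZMod.wilsons_lemma, neg_add_cancel]

theorem Finset.eq_piSingle_of_mem_piAntidiag {ι : Type*} [DecidableEq ι] {n : ℕ}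
    {s : Finset ι} {l : ι → ℕ} (hl : l ∈ s.piAntidiag n) {d : ι} (hd : d ∈ s) (hn : n ≤ l d) :
    l = Pi.single d n := by
  obtain ⟨hsum, hsupp⟩ := mem_piAntidiag.mp hl
  have hsplit : l d + ∑ d' ∈ s.erase d, l d' = n := (add_sum_erase s l hd).trans hsum
  funext d'
  rcases eq_or_ne d' d with rfl | hne
  · rw [Pi.single_eq_same]; omega
  · rw [Pi.single_eq_of_ne hne]
    by_contra h
    have hrest : ∑ d' ∈ s.erase d, l d' = 0 := by omega
    exact h (sum_eq_zero_iff.mp hrest d' (mem_erase.mpr ⟨hne, hsupp d' h⟩))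

section FrobeniusDefect

variable {ι κ A B : Type*} [DecidableEq ι] [CommRing A] [CommRing B]

noncomputable def frobeniusDefect (p : ℕ) (s : Finset ι) (T : ι → A) : A :=
  ∑ l ∈ (s.piAntidiag p).filter (fun l => ∀ d ∈ s, l d < p),
    ((Nat.multinomial s l / p : ℕ) : A) * ∏ d ∈ s, T d ^ l d

theorem sum_piAntidiag_filter_not_forall_lt {p : ℕ} (hp : p ≠ 0) (s : Finset ι) (T : ι → A) :
    ∑ l ∈ (s.piAntidiag p).filter (fun l => ¬ ∀ d ∈ s, l d < p),
      (Nat.multinomial s l : A) * ∏ d ∈ s, T d ^ l d = ∑ d ∈ s, T d ^ p := by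
  symm
  refine sum_nbij (fun d => Pi.single d p) (fun d hd => ?_) (fun d _ d' _ h => ?_) ?_ ?_
  · simp only [mem_filter, mem_piAntidiag, sum_pi_single', if_pos hd]
    refine ⟨⟨trivial, fun d' h => ?_⟩, fun h => (h d hd).ne (by simp)⟩
    obtain rfl : d' = d := by_contra fun hne => h (by simp [hne])
    exact hd
  · by_contra hne
    simpa [hne, hp] using congrFun h d
  · intro l hl
    simp only [coe_filter, mem_piAntidiag, not_forall, not_lt] at hl
    obtain ⟨hl, d, hd, hpd⟩ := hl
    exact ⟨d, hd, (eq_piSingle_of_mem_piAntidiag (mem_piAntidiag.mpr hl) hd hpd).symm⟩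
  · intro d hd
    rw [Nat.multinomial_single, Nat.cast_one, one_mul,
      prod_eq_single d (fun d' _ h => by simp [h]) (by simp [hd]), Pi.single_eq_same]

theorem sum_pow_prime_eq_add_frobeniusDefect {p : ℕ} (hp : p.Prime) (s : Finset ι)
    (T : ι → A) : (∑ d ∈ s, T d) ^ p = ∑ d ∈ s, T d ^ p + p * frobeniusDefect p s T := by
  rw [sum_pow_eq_sum_piAntidiag, ← sum_filter_not_add_sum_filter _ (fun l => ∀ d ∈ s, l d < p),
    sum_piAntidiag_filter_not_forall_lt hp.ne_zero, frobeniusDefect, mul_sum]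
  refine congrArg _ (sum_congr rfl fun l hl => ?_)
  rw [mem_filter, mem_piAntidiag] at hl
  obtain ⟨m, hm⟩ := hp.dvd_multinomial hl.1.1 hl.2
  rw [hm, Nat.mul_div_cancel_left m hp.pos, Nat.cast_mul, mul_assoc]

theorem map_frobeniusDefect (f : A →+* B) (p : ℕ) (s : Finset ι) (T : ι → A) :
    f (frobeniusDefect p s T) = frobeniusDefect p s (fun d => f (T d)) := by
  simp only [frobeniusDefect, map_sum, map_mul, map_natCast, map_prod, map_pow]

theorem frobeniusDefect_image [DecidableEq κ] {e : ι → κ} (he : Function.Injective e) (p : ℕ)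
    (s : Finset ι) (T : κ → A) :
    frobeniusDefect p (s.image e) T = frobeniusDefect p s (fun d => T (e d)) := by
  have hext (l : ι → ℕ) (d : ι) : Function.extend e l 0 (e d) = l d := he.extend_apply l 0 d
  symm
  refine sum_nbij' (fun l => Function.extend e l 0) (fun l => l ∘ e) (fun l hl => ?_)
    (fun l hl => ?_) (fun l _ => funext (hext l)) (fun l hl => ?_) (fun l _ => ?_)
  · simp only [mem_filter, mem_piAntidiag, forall_mem_image, sum_image he.injOn, hext] at hl ⊢
    refine ⟨⟨hl.1.1, fun y hy => ?_⟩, hl.2⟩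
    by_cases hey : ∃ a, e a = y
    · obtain ⟨a, rfl⟩ := hey
      exact mem_image_of_mem e (hl.1.2 a (hext l a ▸ hy))
    · exact absurd (Function.extend_apply' _ _ _ hey) hy
  · simp only [mem_filter, mem_piAntidiag, forall_mem_image, sum_image he.injOn] at hl ⊢
    exact ⟨⟨hl.1.1, fun d hd => he.mem_finset_image.mp (hl.1.2 _ hd)⟩, hl.2⟩
  · simp only [mem_filter, mem_piAntidiag] at hl
    funext y
    by_cases hey : ∃ a, e a = y
    · obtain ⟨a, rfl⟩ := hey
      exact hext _ a
    · rw [Function.extend_apply' _ _ _ hey]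
      by_contra hy
      obtain ⟨a, -, rfl⟩ := mem_image.mp (hl.1.2 y (Ne.symm hy))
      exact hey ⟨a, rfl⟩
  · simp only [Nat.multinomial, sum_image he.injOn, prod_image he.injOn, hext]

theorem natCast_dvd_sum_pow_sub_sum_pow {p : ℕ} (hp : p.Prime) (w : ℕ) (s : Finset ι)
    (T : ι → A) : (p : A) ∣ (∑ d ∈ s, T d) ^ p ^ w - ∑ d ∈ s, T d ^ p ^ w := by
  induction s using Finset.induction_on with
  | empty => simp [hp.ne_zero]
  | insert d s hd ih =>
    obtain ⟨r, hr⟩ := exists_add_pow_prime_pow_eq hp (T d) (∑ d ∈ s, T d) w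
    obtain ⟨c, hc⟩ := ih
    rw [sum_insert hd, sum_insert hd, hr]
    exact ⟨T d * (∑ d ∈ s, T d) * r + c, by linear_combination hc⟩

theorem frobeniusDefect_pow_mem {p : ℕ} (hp : p.Prime) {M : Ideal A} (hp2 : (p : A) ^ 2 = 0)
    (hpM : ∀ a, (p : A) * a = 0 → a ∈ M) {w : ℕ} (hM : M ^ p ^ (w + 1) = ⊥) {s : Finset ι}
    {T : ι → A} (hT : ∑ d ∈ s, T d ∈ M) (hTq : ∀ d ∈ s, T d ^ p ^ (w + 1) = 0) :
    frobeniusDefect p s (fun d => T d ^ p ^ w) ∈ M := by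
  apply hpM
  have hF : (∑ d ∈ s, T d) ^ p ^ (w + 1) = 0 := by
    rw [← Ideal.mem_bot, ← hM]
    exact Ideal.pow_mem_pow hT _
  -- `(∑ T) ^ p ^ w ≡ ∑ T ^ p ^ w` mod `p`, so their `p`-th powers agree mod `p² = 0`
  have hH : (∑ d ∈ s, T d ^ p ^ w) ^ p = 0 := by
    obtain ⟨c, hc⟩ := dvd_sub_pow_of_dvd_sub (natCast_dvd_sum_pow_sub_sum_pow hp w s T) 1
    rwa [pow_one, ← pow_mul, ← pow_succ, hF, hp2, zero_mul, zero_sub, neg_eq_zero] at hc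
  have := sum_pow_prime_eq_add_frobeniusDefect hp s (fun d => T d ^ p ^ w)
  rwa [hH, sum_eq_zero fun d hd => by rw [← pow_mul, ← pow_succ, hTq d hd], zero_add,
    eq_comm] at this

end FrobeniusDefect

theorem Ideal.prod_pow_mem_pow_sum_div {σ A : Type*} [CommSemiring A] {M : Ideal A}
    {y : σ → A} {i : σ → ℕ} (hy : ∀ j, y j ^ i j ∈ M) (s : Finset σ) (D : σ → ℕ) :
    ∏ j ∈ s, y j ^ D j ∈ M ^ ∑ j ∈ s, D j / i j := by
  rw [← prod_pow_eq_pow_sum]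
  refine Ideal.prod_mem_prod fun j _ => ?_
  rw [← pow_mul_pow_sub _ (Nat.mul_div_le (D j) (i j)), pow_mul]
  exact Ideal.mul_mem_right _ _ (Ideal.pow_mem_pow (hy j) _)

namespace MvPolynomial

variable {σ k : Type*}

theorem support_pow_expChar_pow [DecidableEq σ] {p : ℕ} [Field k] [ExpChar k p]
    (f : MvPolynomial σ k) (w : ℕ) : (f ^ p ^ w).support = f.support.image (p ^ w • ·) := by
  rw [← map_iterateFrobenius_expand, support_map_of_injective _ (iterateFrobenius_inj k p w),
    support_expand _ (expChar_pow_pos k p w).ne']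

theorem coeff_pow_expChar_pow_smul {p : ℕ} [CommRing k] [ExpChar k p] (f : MvPolynomial σ k)
    (w : ℕ) (d : σ →₀ ℕ) : (f ^ p ^ w).coeff (p ^ w • d) = f.coeff d ^ p ^ w := by
  rw [← map_iterateFrobenius_expand, coeff_map, coeff_expand_smul _ (expChar_pow_pos k p w).ne',
    iterateFrobenius_def]

theorem wp_eq_neg_frobeniusDefect [DecidableEq σ] {p : ℕ} [Fact p.Prime] [CommRing k]
    [CharP k p] (g : MvPolynomial σ k) :
    wp p g = -frobeniusDefect p g.support (fun d => monomial d (g.coeff d)) := by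
  -- `wp` is elaborated with the classical decidable equality on `σ`
  obtain rfl := Subsingleton.elim ‹DecidableEq σ› (fun a b => Classical.propDecidable (a = b))
  rw [wp, frobeniusDefect, ← sum_neg_distrib]
  refine sum_congr rfl fun l hl => ?_
  rw [mem_filter, mem_piAntidiag] at hl
  rw [← neg_mul, ← map_natCast (C.comp (ZMod.castHom (dvd_refl p) k)),
    ZMod.natCast_multinomial_div_eq_neg_inv hl.1.1 hl.2, map_neg, neg_neg]
  rfl

theorem wp_pow_char_pow [DecidableEq σ] {p : ℕ} [Fact p.Prime] [Field k] [CharP k p]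
    (f : MvPolynomial σ k) (w : ℕ) :
    wp p (f ^ p ^ w) = -frobeniusDefect p f.support (fun d => monomial d (f.coeff d) ^ p ^ w) := by
  have hinj : Function.Injective (p ^ w • · : (σ →₀ ℕ) → σ →₀ ℕ) :=
    smul_right_injective _ (pow_ne_zero w (Fact.out : p.Prime).ne_zero)
  simp only [wp_eq_neg_frobeniusDefect, support_pow_expChar_pow, frobeniusDefect_image hinj,
    coeff_pow_expChar_pow_smul, monomial_pow]

end MvPolynomial

theorem Algebra.TensorProduct.ker_includeRight_of_surjective {R S A : Type*} [CommRing R]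
    [CommRing S] [Algebra R S] [CommRing A] [Algebra R A]
    (h : Function.Surjective (algebraMap R S)) :
    RingHom.ker (includeRight : A →ₐ[R] S ⊗[R] A) =
      (RingHom.ker (algebraMap R S)).map (algebraMap R A) := by
  have hcomp : (includeRight : A →ₐ[R] S ⊗[R] A) =
      (map (Algebra.ofId R S) (AlgHom.id R A)).comp (TensorProduct.lid R A).symm.toAlgHom := by
    ext a; simp
  have hleft : ((TensorProduct.lid R A).toRingEquiv : R ⊗[R] A →+* A).comp
      (includeLeft : R →ₐ[R] R ⊗[R] A).toRingHom = algebraMap R A :=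
    congrArg AlgHom.toRingHom
      (Subsingleton.elim ((TensorProduct.lid R A).toAlgHom.comp includeLeft) (Algebra.ofId R A))
  rw [hcomp, AlgHom.ker_coe, AlgHom.comp_toRingHom, ← RingHom.comap_ker, ← AlgHom.ker_coe,
    rTensor_ker _ h]
  change Ideal.comap (TensorProduct.lid R A).toRingEquiv.symm
    (Ideal.map (includeLeft : R →ₐ[R] R ⊗[R] A).toRingHom (RingHom.ker (algebraMap R S))) = _
  rw [Ideal.comap_symm]
  change Ideal.map ((TensorProduct.lid R A).toRingEquiv : R ⊗[R] A →+* A) _ = _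
  rw [Ideal.map_map, hleft]

theorem Module.Flat.mem_map_of_algebraMap_mul_eq_zero {R A : Type*} [CommRing R] [CommRing A]
    [Algebra R A] [Module.Flat R A] {r : R} {J : Ideal R} (hJ : ∀ x, r * x = 0 → x ∈ J) {a : A}
    (h : algebraMap R A r * a = 0) : a ∈ J.map (algebraMap R A) := by
  rw [← Algebra.smul_def] at h
  obtain ⟨_, c, y, hy, hc⟩ := Module.Flat.isTrivialRelation_of_sum_smul_eq_zero
    (f := fun _ : Unit => r) (x := fun _ => a) (by simpa using h)
  rw [show a = _ from hy (), ← Submodule.restrictScalars_mem R, ← Ideal.smul_top_eq_map]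
  exact sum_mem fun j _ => Submodule.smul_mem_smul (hJ _ (by simpa using hc j)) Submodule.mem_top

theorem IsLiftable.exists_flat_surjection {R : Type u} {k : Type v} [CommRing R] [CommRing k]
    {π : R →+* k} (hπ : Function.Surjective π) {A₀ : Type w} [CommRing A₀] [Algebra k A₀]
    (h : IsLiftable π A₀) :
    ∃ (A : Type (max u v w)) (_ : CommRing A) (_ : Algebra R A), Module.Flat R A ∧
      ∃ φ : A →+* A₀, Function.Surjective φ ∧
        RingHom.ker φ = (RingHom.ker π).map (algebraMap R A) := by
  obtain ⟨A, _, _, hA, hθ⟩ := h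
  let _ : Algebra R k := π.toAlgebra
  obtain ⟨θ⟩ := hθ
  refine ⟨A, _, _, hA, θ.toRingHom.comp Algebra.TensorProduct.includeRight.toRingHom,
    θ.surjective.comp (Algebra.TensorProduct.includeRight_surjective _ hπ), ?_⟩
  rw [RingHom.ker_comp_of_injective _ θ.injective]
  exact Algebra.TensorProduct.ker_includeRight_of_surjective hπ

theorem wp_pow_mem_of_surjective {σ k A : Type*} [Fintype σ] {p : ℕ} [Fact p.Prime] [Field k]
    [CharP k p] [CommRing A] {K : Ideal (MvPolynomial σ k)} {φ : A →+* MvPolynomial σ k ⧸ K}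
    (hφ : Function.Surjective φ) (hp2 : (p : A) ^ 2 = 0)
    (hpM : ∀ a, (p : A) * a = 0 → a ∈ RingHom.ker φ) {e w : ℕ} (he : e + 1 ≤ p ^ (w + 1))
    (hMe : RingHom.ker φ ^ (e + 1) = ⊥) {i : σ → ℕ} (hXK : ∀ j, X j ^ i j ∈ K)
    {f : MvPolynomial σ k} (hf : f ∈ K)
    (hmon : ∀ d ∈ f.support, e + 1 ≤ ∑ j, p ^ (w + 1) * d j / i j) :
    wp p (f ^ p ^ w) ∈ K := by
  choose y hy using fun j => hφ (Ideal.Quotient.mk K (X j))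
  choose a ha using fun d => hφ (Ideal.Quotient.mk K (C (f.coeff d)))
  set T : (σ →₀ ℕ) → A := fun d => a d * ∏ j, y j ^ d j
  have hφT (d : σ →₀ ℕ) : φ (T d) = Ideal.Quotient.mk K (monomial d (f.coeff d)) := by
    simp only [T, monomial_eq, Finsupp.prod_fintype _ _ (fun j => pow_zero _), map_mul, map_prod,
      map_pow, ha, hy]
  have hyM (j : σ) : y j ^ i j ∈ RingHom.ker φ := by
    rw [RingHom.mem_ker, map_pow, hy, ← map_pow, Ideal.Quotient.eq_zero_iff_mem]
    exact hXK j
  have hTM : ∑ d ∈ f.support, T d ∈ RingHom.ker φ := by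
    rw [RingHom.mem_ker, map_sum]
    simp only [hφT]
    rw [← map_sum, ← as_sum, Ideal.Quotient.eq_zero_iff_mem]
    exact hf
  have hTq (d : σ →₀ ℕ) (hd : d ∈ f.support) : T d ^ p ^ (w + 1) = 0 := by
    rw [← Ideal.mem_bot, ← hMe, mul_pow, ← prod_pow]
    simp only [← pow_mul, mul_comm _ (p ^ (w + 1))]
    exact Ideal.mul_mem_left _ _
      (Ideal.pow_le_pow_right (hmon d hd) (Ideal.prod_pow_mem_pow_sum_div hyM _ _))
  have hM : RingHom.ker φ ^ p ^ (w + 1) = ⊥ := eq_bot_iff.mpr (hMe ▸ Ideal.pow_le_pow_right he)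
  have := frobeniusDefect_pow_mem (Fact.out : p.Prime) hp2 hpM hM hTM hTq
  rw [RingHom.mem_ker, map_frobeniusDefect] at this
  rw [wp_pow_char_pow, Ideal.neg_mem_iff, ← Ideal.Quotient.eq_zero_iff_mem, map_frobeniusDefect]
  simpa only [map_pow, hφT] using this

theorem wp_mem_of_liftable_general (p : ℕ) [Fact p.Prime] (r : ℕ) (hr : 1 ≤ r)
    {R : Type u} [CommRing R] [IsLocalRing R]
    {k : Type u} [Field k] [CharP k p]
    (π : R →+* k) (hπ : Function.Surjective π)
    (hker : RingHom.ker π = IsLocalRing.maximalIdeal R)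
    (hpR : (p : R) ≠ 0)
    (hpm : ∀ x ∈ IsLocalRing.maximalIdeal R, (p : R) * x = 0)
    (e : ℕ) (he2 : e ≤ p ^ r - 1)
    (hme : IsLocalRing.maximalIdeal R ^ (e + 1) = ⊥)
    (n : ℕ) (i : Fin n → ℕ)
    (I : Ideal (MvPolynomial (Fin n) k))
    (f₀ : MvPolynomial (Fin n) k) (hf₀ : f₀ ∈ I)
    (hmon : ∀ d ∈ f₀.support, e + 1 ≤ ∑ j, p ^ r * d j / i j)
    (K : Ideal (MvPolynomial (Fin n) k))
    (hK : K = Ideal.span (Set.range fun j => MvPolynomial.X j ^ i j) ⊔ I)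
    (hlift : IsLiftable π (MvPolynomial (Fin n) k ⧸ K)) :
    wp p (f₀ ^ p ^ (r - 1)) ∈ K := by
  have hp : p.Prime := Fact.out
  obtain ⟨w, rfl⟩ : ∃ w, r = w + 1 := ⟨r - 1, by omega⟩
  rw [Nat.add_sub_cancel]
  obtain ⟨A, _, _, _, φ, hφ, hφker⟩ := hlift.exists_flat_surjection hπ
  rw [hker] at hφker
  have hp_mem : (p : R) ∈ IsLocalRing.maximalIdeal R := by
    rw [← hker, RingHom.mem_ker, map_natCast, CharP.cast_eq_zero]
  refine wp_pow_mem_of_surjective hφ ?_ (fun a ha => ?_)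
    (by have := pow_pos hp.pos (w + 1); omega)
    (by rw [hφker, ← Ideal.map_pow, hme, Ideal.map_bot])
    (fun j => hK ▸ Ideal.mem_sup_left (Ideal.subset_span ⟨j, rfl⟩)) (hK ▸ Ideal.mem_sup_right hf₀)
    hmon
  · rw [← map_natCast (algebraMap R A), ← map_pow, sq, hpm _ hp_mem, map_zero]
  · rw [hφker]
    refine Module.Flat.mem_map_of_algebraMap_mul_eq_zero (r := (p : R)) (fun x hx => ?_)
      (by rwa [map_natCast])
    by_contra hxm
    exact hpR ((IsLocalRing.notMem_maximalIdeal.mp hxm).mul_left_eq_zero.mp hx)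

/-- **Langer, Theorem 3.4.** Let `p` be prime, `q = p^r` with `r ≥ 1`, and let `(R, m_R)` be
a local ring with residue field `k` of characteristic `p` such that `pR ≠ 0`, `p·m_R = 0`
and `m_R^{e+1} = 0` for some `1 ≤ e ≤ q − 1`. Let `I ⊆ k[x₁, ..., xₙ]` be an ideal and
`f₀ ∈ I` a polynomial such that every multi-index `(l₁, ..., lₙ)` of a monomial of `f₀`
satisfies `⌊q·l₁/i₁⌋ + ⋯ + ⌊q·lₙ/iₙ⌋ ≥ e + 1`, where the `i_j ≤ q` are positive. If
`A₀ = k[x₁, ..., xₙ]/((x₁^{i₁}, ..., xₙ^{iₙ}) + I)` is liftable to `R → k`, then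
`w_p(f₀^{p^{r−1}}) ∈ (x₁^{i₁}, ..., xₙ^{iₙ}) + I`. -/
theorem wp_mem_of_liftable (p : ℕ) [Fact p.Prime] (r : ℕ) (hr : 1 ≤ r)
    {R : Type u} [CommRing R] [IsLocalRing R]
    {k : Type u} [Field k] [CharP k p]
    (π : R →+* k) (hπ : Function.Surjective π)
    (hker : RingHom.ker π = IsLocalRing.maximalIdeal R)
    (hpR : (p : R) ≠ 0)
    (hpm : ∀ x ∈ IsLocalRing.maximalIdeal R, (p : R) * x = 0)
    (e : ℕ) (he1 : 1 ≤ e) (he2 : e ≤ p ^ r - 1)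
    (hme : IsLocalRing.maximalIdeal R ^ (e + 1) = ⊥)
    (n : ℕ) (i : Fin n → ℕ) (hipos : ∀ j, 0 < i j) (hile : ∀ j, i j ≤ p ^ r)
    (I : Ideal (MvPolynomial (Fin n) k))
    (f₀ : MvPolynomial (Fin n) k) (hf₀ : f₀ ∈ I)
    (hmon : ∀ d ∈ f₀.support, e + 1 ≤ ∑ j, p ^ r * d j / i j)
    (K : Ideal (MvPolynomial (Fin n) k))
    (hK : K = Ideal.span (Set.range fun j => MvPolynomial.X j ^ i j) ⊔ I)
    (hlift : IsLiftable π (MvPolynomial (Fin n) k ⧸ K)) :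
    wp p (f₀ ^ p ^ (r - 1)) ∈ K :=
  wp_mem_of_liftable_general p r hr π hπ hker hpR hpm e he2 hme n i I f₀ hf₀ hmon K hK hlift
end

section
/- Let k be a field of characteristic p > 0 and let A₀ = k[x₁, ..., xₙ]/(x₁^p, ..., xₙ^p, f₀), where f₀ = y₁ + y₂ + y₃ is a sum of three nonzero monomials, each of total degree ≥ 2, such that each variable xᵢ appears in the product y₁·(y₂y₃)^{p−1} with degree strictly less than p. Then the ideal (x₁, ..., xₙ) of A₀ does not admit a divided power structure. -/
/-!
Suppose `γ` is a divided power structure on `(x₁, …, xₙ)`. A monomial of degree `≥ 2` is `v · xₐ`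
with `v ^ p = 0`, so `γ_p` kills it; applied to `y₂ + y₃ = -y₁`, the expansion of `γ_p(y₂ + y₃)`
shows that `S = ∑_{0<j<p} y₂^j y₃^(p-j) / (j! (p-j)!)` lies in `K = (x₁^p, …, xₙ^p, f₀)`.
Since `f₀ ^ p ∈ (x₁^p, …, xₙ^p)`, the product `S f₀^(p-1)` lies in this ideal too, so its
coefficient at the exponent `d₁ + (p-1)(d₂ + d₃)`, all of whose entries are `< p`, vanishes.
The bound on the exponents of `y₁ (y₂ y₃)^(p-1)` forces `d₁, d₂, d₃` to have disjoint supports, so this coefficient can be read off the multinomial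
expansion of `f₀^(p-1)`: by Wilson's theorem each of the `p - 1` summands of `S` contributes
`c₁ c₂^(p-1) c₃^(p-1)`, and the total `(p-1) c₁ c₂^(p-1) c₃^(p-1)` is nonzero.
-/

universe u

open Finset MvPolynomial
open scoped Nat

section CharP

variable {k : Type*} [Field k] {p : ℕ} [Fact p.Prime] [CharP k p]

theorem natCast_factorial_ne_zero_of_lt {n : ℕ} (hn : n < p) : (n ! : k) ≠ 0 := by
  rw [Ne, CharP.cast_eq_zero_iff k p, Nat.Prime.dvd_factorial Fact.out]
  omega

theorem factorial_mul_factorial_eq_neg_one_pow {i j : ℕ} (h : i + j + 1 = p) :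
    (i ! * j ! : k) = (-1) ^ (i + 1) := by
  induction i generalizing j with
  | zero =>
    obtain rfl : j = p - 1 := by omega
    have hwilson := congrArg (ZMod.castHom dvd_rfl k) (ZMod.wilsons_lemma (p := p))
    rw [map_natCast, map_neg, map_one] at hwilson
    simpa using hwilson
  | succ i ih =>
    have hsum : ((i + 1 + (j + 1) : ℕ) : k) = 0 := by
      rw [CharP.cast_eq_zero_iff k p]
      exact ⟨1, by omega⟩
    have hprev := ih (j := j + 1) (by omega)
    push_cast [Nat.factorial_succ] at hsum hprev ⊢
    linear_combination (-1 : k) * hprev + (i ! * j ! : k) * hsum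

theorem multinomial_eq_factorial_mul_factorial {i j : ℕ} (h : i + j + 2 = p) :
    (Nat.multinomial univ ![1, j, i] : k) = (i + 1)! * (j + 1)! := by
  have hspec := congrArg (Nat.cast (R := k)) (Nat.multinomial_spec univ ![1, j, i])
  simp only [Fin.prod_univ_three, Fin.sum_univ_three, Matrix.cons_val_zero, Matrix.cons_val_one,
    Matrix.cons_val_two, Matrix.head_cons, Matrix.tail_cons, Nat.factorial_one, one_mul,
    Nat.cast_mul] at hspec
  have hwilson := factorial_mul_factorial_eq_neg_one_pow (k := k) (i := 0) (j := 1 + j + i)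
    (by omega)
  simp only [Nat.factorial_zero, Nat.cast_one, one_mul] at hwilson
  have hprod : (i ! * (j + 1)! * ((i + 1)! * j !) : k) = -1 := by
    rw [factorial_mul_factorial_eq_neg_one_pow (by omega),
      factorial_mul_factorial_eq_neg_one_pow (by omega), ← pow_add]
    exact Odd.neg_one_pow ⟨i + 1, by ring⟩
  have hne : (j ! * i ! : k) ≠ 0 :=
    mul_ne_zero (natCast_factorial_ne_zero_of_lt (by omega))
      (natCast_factorial_ne_zero_of_lt (by omega))
  refine mul_left_cancel₀ hne ?_
  linear_combination hspec + hwilson - hprod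

end CharP

theorem Finsupp.injective_sum_smul_of_pairwise_disjoint_support {ι σ : Type*} [Fintype ι]
    {d : ι → σ →₀ ℕ} (hd : ∀ i, d i ≠ 0)
    (hdisj : Pairwise fun i j => Disjoint (d i).support (d j).support) :
    Function.Injective fun e : ι → ℕ => ∑ i, e i • d i := by
  intro e e' he
  funext i
  obtain ⟨a, ha⟩ := Finsupp.ne_iff.mp (hd i)
  have hsum_apply (e : ι → ℕ) : (∑ t, e t • d t) a = e i * d i a := by
    rw [Finsupp.finsetSum_apply, Finset.sum_eq_single i]
    · simp
    · intro t _ hti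
      have : a ∉ (d t).support :=
        Finset.disjoint_left.mp (hdisj hti.symm) (Finsupp.mem_support_iff.mpr ha)
      simp [Finsupp.notMem_support_iff.mp this]
    · simp
  have := congrArg (· a) he
  simp only [hsum_apply] at this
  exact Nat.eq_of_mul_eq_mul_right (Nat.pos_of_ne_zero ha) this

theorem Finsupp.pairwise_disjoint_support_of_add_mul_lt {σ : Type*} {d₁ d₂ d₃ : σ →₀ ℕ} {q : ℕ}
    (hlt : ∀ a, d₁ a + (q + 1) * (d₂ a + d₃ a) < q + 2) :
    Pairwise fun i j => Disjoint (![d₁, d₂, d₃] i).support (![d₁, d₂, d₃] j).support := by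
  intro i j hij
  refine Finset.disjoint_left.mpr fun a hi hj => ?_
  rw [Finsupp.mem_support_iff] at hi hj
  have hlta := hlt a
  have h₂₃ : d₂ a + d₃ a ≤ 1 := by nlinarith
  have h₁ : d₂ a + d₃ a = 1 → d₁ a = 0 := fun h => by rw [h] at hlta; omega
  fin_cases i <;> fin_cases j <;> simp at hij hi hj <;> omega

theorem Ideal.mul_pow_mem_of_mem_sup_span_singleton {R : Type*} [CommSemiring R] {J : Ideal R}
    {f g : R} {m : ℕ} (hf : f ^ (m + 1) ∈ J) (hg : g ∈ J ⊔ Ideal.span {f}) : g * f ^ m ∈ J := by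
  obtain ⟨a, ha, b, hb, rfl⟩ := Submodule.mem_sup.mp hg
  obtain ⟨r, rfl⟩ := Ideal.mem_span_singleton'.mp hb
  rw [add_mul, mul_assoc, ← pow_succ']
  exact J.add_mem (J.mul_mem_right _ ha) (J.mul_mem_left _ hf)

section DpowCrossSum

variable (k : Type*) {A B : Type*} [Field k] [CommRing A] [Algebra k A] [CommRing B] [Algebra k B]

/-- `∑_{i + j = q} y^(i+1) z^(j+1) / ((i+1)! (j+1)!)`: the mixed terms of `γ_{q+2}(y + z)` for
divided powers over a field in which `(q+1)!` is invertible. -/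
noncomputable def dpowCrossSum (q : ℕ) (y z : A) : A :=
  ∑ ij ∈ antidiagonal q,
    algebraMap k A ((ij.1 + 1)! * (ij.2 + 1)! : k)⁻¹ * y ^ (ij.1 + 1) * z ^ (ij.2 + 1)

variable {k}

theorem AlgHom.map_dpowCrossSum (f : A →ₐ[k] B) (q : ℕ) (y z : A) :
    f (dpowCrossSum k q y z) = dpowCrossSum k q (f y) (f z) := by
  simp [dpowCrossSum]

end DpowCrossSum

namespace DividedPowers

variable {A : Type*} [CommRing A] {I : Ideal A} (δ : DividedPowers I) {x y : A}

theorem dpow_add_eq_add_add_sum_antidiagonal (hx : x ∈ I) (hy : y ∈ I) (n : ℕ) :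
    δ.dpow (n + 2) (x + y) = δ.dpow (n + 2) x + δ.dpow (n + 2) y +
      ∑ ij ∈ antidiagonal n, δ.dpow (ij.1 + 1) x * δ.dpow (ij.2 + 1) y := by
  rw [δ.dpow_add hx hy, Finset.Nat.sum_antidiagonal_succ, Finset.Nat.sum_antidiagonal_succ']
  simp only [δ.dpow_zero hx, δ.dpow_zero hy, one_mul, mul_one]
  ring

theorem dpow_eq_algebraMap_inv_mul_pow {k : Type*} [Field k] [Algebra k A] {n : ℕ}
    (hn : (n ! : k) ≠ 0) (hx : x ∈ I) : δ.dpow n x = algebraMap k A (n ! : k)⁻¹ * x ^ n := by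
  rw [← δ.factorial_mul_dpow_eq_pow hx, ← map_natCast (algebraMap k A), ← mul_assoc, ← map_mul,
    inv_mul_cancel₀ hn, map_one, one_mul]

theorem dpowCrossSum_eq_zero {k : Type*} [Field k] [Algebra k A] {q : ℕ}
    (hq : ((q + 1)! : k) ≠ 0) (hx : x ∈ I) (hy : y ∈ I) (hx₀ : δ.dpow (q + 2) x = 0)
    (hy₀ : δ.dpow (q + 2) y = 0) (hxy₀ : δ.dpow (q + 2) (x + y) = 0) :
    dpowCrossSum k q x y = 0 := by
  have hfac {n : ℕ} (hn : n ≤ q + 1) : (n ! : k) ≠ 0 := fun h =>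
    hq (zero_dvd_iff.mp (h ▸ Nat.cast_dvd_cast (Nat.factorial_dvd_factorial hn)))
  rw [δ.dpow_add_eq_add_add_sum_antidiagonal hx hy, hx₀, hy₀, zero_add, zero_add] at hxy₀
  rw [← hxy₀, dpowCrossSum]
  refine sum_congr rfl fun ij hij => ?_
  have := mem_antidiagonal.mp hij
  rw [δ.dpow_eq_algebraMap_inv_mul_pow (hfac (by omega)) hx,
    δ.dpow_eq_algebraMap_inv_mul_pow (hfac (by omega)) hy, mul_inv, map_mul]
  ring

end DividedPowers

namespace MvPolynomial

section Monomial

variable {σ R : Type*} [CommSemiring R]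

theorem coeff_sum_monomial_pow {ι : Type*} [Fintype ι] [DecidableEq ι] {d : ι → σ →₀ ℕ}
    (hd : Function.Injective fun e : ι → ℕ => ∑ i, e i • d i) (c : ι → R) (e : ι → ℕ) :
    coeff (∑ i, e i • d i) ((∑ i, monomial (d i) (c i)) ^ ∑ i, e i) =
      Nat.multinomial univ e * ∏ i, c i ^ e i := by
  classical
  simp_rw [Finset.sum_pow_eq_sum_piAntidiag, monomial_pow, ← monomial_sum_prod]
  rw [coeff_sum, Finset.sum_eq_single_of_mem e (by simp)]
  · rw [← C_eq_coe_nat, coeff_C_mul, coeff_monomial, if_pos rfl]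
  · intro e' _ hne
    rw [← C_eq_coe_nat, coeff_C_mul, coeff_monomial, if_neg fun h => hne (hd h), mul_zero]

theorem mem_span_range_X_pow_iff {p : ℕ} {g : MvPolynomial σ R} :
    g ∈ Ideal.span (Set.range fun a => X a ^ p) ↔ ∀ m ∈ g.support, ∃ a, p ≤ m a := by
  have : (Set.range fun a => (X a ^ p : MvPolynomial σ R)) =
      (fun s => monomial s 1) '' Set.range fun a => Finsupp.single a p := by
    rw [← Set.range_comp]
    simp [Function.comp_def, X_pow_eq_monomial]
  simp [this, mem_ideal_span_monomial_image, Finsupp.single_le_iff]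

theorem coeff_eq_zero_of_mem_span_range_X_pow {p : ℕ} {g : MvPolynomial σ R}
    (hg : g ∈ Ideal.span (Set.range fun a => X a ^ p)) {m : σ →₀ ℕ} (hm : ∀ a, m a < p) :
    coeff m g = 0 := by
  by_contra h
  obtain ⟨a, ha⟩ := mem_span_range_X_pow_iff.mp hg m (mem_support_iff.mpr h)
  exact (hm a).not_ge ha

theorem monomial_pow_mem_span_range_X_pow (p : ℕ) {v : σ →₀ ℕ} (hv : v ≠ 0) (c : R) :
    monomial v c ^ p ∈ Ideal.span (Set.range fun a => X a ^ p) := by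
  classical
  obtain ⟨a, ha⟩ := Finsupp.ne_iff.mp hv
  rw [mem_span_range_X_pow_iff, monomial_pow]
  intro m hm
  obtain rfl := Finset.mem_singleton.mp (support_monomial_subset hm)
  exact ⟨a, by simpa using Nat.le_mul_of_pos_right p (Nat.pos_of_ne_zero ha)⟩

end Monomial

section Quotient

variable {σ k : Type*} [Field k] {K : Ideal (MvPolynomial σ k)}

theorem mk_monomial_mem_map_span_range_X {d : σ →₀ ℕ} (hd : d ≠ 0) (c : k) :
    Ideal.Quotient.mk K (monomial d c) ∈ (Ideal.span (Set.range X)).map (Ideal.Quotient.mk K) := by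
  refine Ideal.mem_map_of_mem _ ?_
  rw [← Set.image_univ, mem_ideal_span_X_image]
  obtain ⟨a, ha⟩ := Finsupp.ne_iff.mp hd
  intro m hm
  obtain rfl := Finset.mem_singleton.mp (support_monomial_subset hm)
  exact ⟨a, trivial, ha⟩

theorem dpow_mk_monomial_eq_zero {p : ℕ} (hK : Ideal.span (Set.range fun a => X a ^ p) ≤ K)
    (δ : DividedPowers ((Ideal.span (Set.range X)).map (Ideal.Quotient.mk K))) {d : σ →₀ ℕ}
    (hd : 2 ≤ d.degree) (c : k) : δ.dpow p (Ideal.Quotient.mk K (monomial d c)) = 0 := by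
  obtain ⟨a, ha⟩ := Finsupp.ne_iff.mp ((d.degree_eq_zero_iff).not.mp (by omega))
  have hle : Finsupp.single a 1 ≤ d := Finsupp.single_le_iff.mpr (Nat.one_le_iff_ne_zero.mpr ha)
  have hv : d - Finsupp.single a 1 ≠ 0 := by
    intro h
    rw [← tsub_add_cancel_of_le hle, h, zero_add, Finsupp.degree_single] at hd
    omega
  have hsplit : monomial d c = monomial (d - Finsupp.single a 1) c * X a := by
    rw [X, monomial_mul, mul_one, tsub_add_cancel_of_le hle]
  have hXa : Ideal.Quotient.mk K (X a) ∈ (Ideal.span (Set.range X)).map (Ideal.Quotient.mk K) :=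
    mk_monomial_mem_map_span_range_X (by simp) 1
  rw [hsplit, map_mul, δ.dpow_mul hXa, ← map_pow,
    Ideal.Quotient.eq_zero_iff_mem.mpr (hK (monomial_pow_mem_span_range_X_pow p hv c)), zero_mul]

theorem dpowCrossSum_mem {q : ℕ} (hq : ((q + 1)! : k) ≠ 0)
    (hK : Ideal.span (Set.range fun a => X a ^ (q + 2)) ≤ K)
    (δ : DividedPowers ((Ideal.span (Set.range X)).map (Ideal.Quotient.mk K)))
    {d₁ d₂ d₃ : σ →₀ ℕ} (hd₁ : 2 ≤ d₁.degree) (hd₂ : 2 ≤ d₂.degree) (hd₃ : 2 ≤ d₃.degree)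
    {c₁ c₂ c₃ : k} (hf : monomial d₁ c₁ + monomial d₂ c₂ + monomial d₃ c₃ ∈ K) :
    dpowCrossSum k q (monomial d₂ c₂) (monomial d₃ c₃) ∈ K := by
  have hne {d : σ →₀ ℕ} (hd : 2 ≤ d.degree) : d ≠ 0 := (d.degree_eq_zero_iff).not.mp (by omega)
  set π := Ideal.Quotient.mk K
  have hzero : π (monomial d₁ c₁) + π (monomial d₂ c₂) + π (monomial d₃ c₃) = 0 := by
    rw [← map_add, ← map_add]
    exact Ideal.Quotient.eq_zero_iff_mem.mpr hf
  have hsum : π (monomial d₂ c₂) + π (monomial d₃ c₃) = -1 * π (monomial d₁ c₁) := by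
    linear_combination hzero
  rw [← Ideal.Quotient.eq_zero_iff_mem, ← Ideal.Quotient.mkₐ_eq_mk k, AlgHom.map_dpowCrossSum]
  refine δ.dpowCrossSum_eq_zero hq (mk_monomial_mem_map_span_range_X (hne hd₂) c₂)
    (mk_monomial_mem_map_span_range_X (hne hd₃) c₃) (dpow_mk_monomial_eq_zero hK δ hd₂ c₂)
    (dpow_mk_monomial_eq_zero hK δ hd₃ c₃) ?_
  rw [Ideal.Quotient.mkₐ_eq_mk, hsum, δ.dpow_mul (mk_monomial_mem_map_span_range_X (hne hd₁) c₁),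
    dpow_mk_monomial_eq_zero hK δ hd₁ c₁, mul_zero]

end Quotient

section Trinomial

variable {σ k : Type*} [Field k] {q : ℕ} [Fact (q + 2).Prime] [CharP k (q + 2)]

theorem coeff_dpowCrossSum_mul_pow {d : Fin 3 → σ →₀ ℕ}
    (hd : Function.Injective fun e : Fin 3 → ℕ => ∑ i, e i • d i) (c : Fin 3 → k) :
    coeff (d 0 + (q + 1) • d 1 + (q + 1) • d 2)
      (dpowCrossSum k q (monomial (d 1) (c 1)) (monomial (d 2) (c 2)) *
        (∑ i, monomial (d i) (c i)) ^ (q + 1)) = (q + 1) * (c 0 * c 1 ^ (q + 1) * c 2 ^ (q + 1)) := by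
  rw [dpowCrossSum, Finset.sum_mul, coeff_sum]
  have hterm : ∀ ij ∈ antidiagonal q,
      coeff (d 0 + (q + 1) • d 1 + (q + 1) • d 2)
        (algebraMap k _ ((ij.1 + 1)! * (ij.2 + 1)! : k)⁻¹ * monomial (d 1) (c 1) ^ (ij.1 + 1) *
          monomial (d 2) (c 2) ^ (ij.2 + 1) * (∑ i, monomial (d i) (c i)) ^ (q + 1)) =
        c 0 * c 1 ^ (q + 1) * c 2 ^ (q + 1) := by
    rintro ⟨i, j⟩ hij
    rw [Finset.HasAntidiagonal.mem_antidiagonal] at hij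
    subst hij
    have hexp : d 0 + (i + j + 1) • d 1 + (i + j + 1) • d 2 =
        ((i + 1) • d 1 + (j + 1) • d 2) + ∑ t, ![1, j, i] t • d t := by
      simp only [Fin.sum_univ_three, Matrix.cons_val_zero, Matrix.cons_val_one,
        Matrix.cons_val_two, Matrix.head_cons, Matrix.tail_cons, add_smul, one_smul]
      abel
    have hdeg : i + j + 1 = ∑ t, ![1, j, i] t := by
      simp [Fin.sum_univ_three]
      ring
    rw [hexp, algebraMap_eq, monomial_pow, monomial_pow, C_mul_monomial, monomial_mul, hdeg,
      coeff_monomial_mul, coeff_sum_monomial_pow hd, ← hdeg]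
    simp only [Fin.prod_univ_three, Matrix.cons_val_zero, Matrix.cons_val_one,
      Matrix.cons_val_two, Matrix.head_cons, Matrix.tail_cons, pow_one]
    rw [multinomial_eq_factorial_mul_factorial (p := i + j + 2) rfl]
    have hi : ((i + 1)! : k) ≠ 0 := natCast_factorial_ne_zero_of_lt (p := i + j + 2) (by omega)
    have hj : ((j + 1)! : k) ≠ 0 := natCast_factorial_ne_zero_of_lt (p := i + j + 2) (by omega)
    field_simp
    ring
  rw [sum_congr rfl hterm, sum_const, Nat.card_antidiagonal, nsmul_eq_mul]
  push_cast
  ring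

theorem dpowCrossSum_notMem_span {d₁ d₂ d₃ : σ →₀ ℕ} {c₁ c₂ c₃ : k}
    (hc₁ : c₁ ≠ 0) (hc₂ : c₂ ≠ 0) (hc₃ : c₃ ≠ 0) (hd₁ : d₁ ≠ 0) (hd₂ : d₂ ≠ 0) (hd₃ : d₃ ≠ 0)
    (hlt : ∀ a, d₁ a + (q + 1) * (d₂ a + d₃ a) < q + 2) :
    dpowCrossSum k q (monomial d₂ c₂) (monomial d₃ c₃) ∉ Ideal.span
      ((Set.range fun a => X a ^ (q + 2)) ∪ {monomial d₁ c₁ + monomial d₂ c₂ + monomial d₃ c₃}) := by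
  set d := ![d₁, d₂, d₃]
  set c := ![c₁, c₂, c₃]
  have hd₀ : ∀ i, d i ≠ 0 := fun i => by fin_cases i; exacts [hd₁, hd₂, hd₃]
  have hf : monomial d₁ c₁ + monomial d₂ c₂ + monomial d₃ c₃ = ∑ i, monomial (d i) (c i) := by
    simp [d, c, Fin.sum_univ_three]
  have hpow : (∑ i, monomial (d i) (c i)) ^ (q + 2) ∈
      Ideal.span (Set.range fun a => X a ^ (q + 2)) := by
    rw [sum_pow_char]
    exact Ideal.sum_mem _ fun i _ => monomial_pow_mem_span_range_X_pow _ (hd₀ i) _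
  show dpowCrossSum k q (monomial (d 1) (c 1)) (monomial (d 2) (c 2)) ∉ _
  intro hmem
  rw [Ideal.span_union, hf] at hmem
  have hcoeff := coeff_eq_zero_of_mem_span_range_X_pow
    (Ideal.mul_pow_mem_of_mem_sup_span_singleton hpow hmem)
    (m := d 0 + (q + 1) • d 1 + (q + 1) • d 2) fun a => by simpa [d, mul_add, add_assoc] using hlt a
  rw [coeff_dpowCrossSum_mul_pow (Finsupp.injective_sum_smul_of_pairwise_disjoint_support hd₀
    (Finsupp.pairwise_disjoint_support_of_add_mul_lt hlt))] at hcoeff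
  have hq : ((q + 1 : ℕ) : k) ≠ 0 := by
    rw [Ne, CharP.cast_eq_zero_iff k (q + 2)]
    exact Nat.not_dvd_of_pos_of_lt (by omega) (by omega)
  exact mul_ne_zero (by exact_mod_cast hq) (by simp [c, hc₁, hc₂, hc₃]) hcoeff

end Trinomial

end MvPolynomial

theorem no_dividedPowers_of_monomials_general (p : ℕ) (hp : p.Prime)
    {k : Type u} [Field k] [CharP k p]
    (n : ℕ) (d₁ d₂ d₃ : Fin n →₀ ℕ) (c₁ c₂ c₃ : k)
    (hc₁ : c₁ ≠ 0) (hc₂ : c₂ ≠ 0) (hc₃ : c₃ ≠ 0)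
    (hdeg₁ : 2 ≤ d₁.sum fun _ e => e) (hdeg₂ : 2 ≤ d₂.sum fun _ e => e)
    (hdeg₃ : 2 ≤ d₃.sum fun _ e => e)
    (hvar : ∀ a : Fin n, d₁ a + (p - 1) * (d₂ a + d₃ a) < p)
    (f₀ : MvPolynomial (Fin n) k)
    (hf₀ : f₀ = MvPolynomial.monomial d₁ c₁ + MvPolynomial.monomial d₂ c₂ +
      MvPolynomial.monomial d₃ c₃)
    (K : Ideal (MvPolynomial (Fin n) k))
    (hK : K = Ideal.span ((Set.range fun a => MvPolynomial.X a ^ p) ∪ {f₀})) :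
    ¬ Nonempty (DividedPowers
      ((Ideal.span (Set.range MvPolynomial.X)).map (Ideal.Quotient.mk K))) := by
  rintro ⟨δ⟩
  obtain ⟨q, rfl⟩ : ∃ q, p = q + 2 := ⟨p - 2, by have := hp.two_le; omega⟩
  have := Fact.mk hp
  have hne {d : Fin n →₀ ℕ} (hd : 2 ≤ d.degree) : d ≠ 0 := (d.degree_eq_zero_iff).not.mp (by omega)
  subst hf₀ hK
  refine dpowCrossSum_notMem_span hc₁ hc₂ hc₃ (hne hdeg₁) (hne hdeg₂) (hne hdeg₃)
    (by simpa using hvar) ?_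
  exact dpowCrossSum_mem (natCast_factorial_ne_zero_of_lt (by omega))
    (Ideal.span_mono Set.subset_union_left) δ hdeg₁ hdeg₂ hdeg₃
    (Ideal.subset_span (Set.mem_union_right _ rfl))

/-- **Langer, Corollary 4.2.** Let `k` be a field of characteristic `p > 0` and
`A₀ = k[x₁, ..., xₙ]/(x₁^p, ..., xₙ^p, f₀)`, where `f₀ = y₁ + y₂ + y₃` is a sum of three
nonzero monomials, each of total degree `≥ 2`, such that each variable `xᵢ` appears in the
product `y₁·(y₂y₃)^{p−1}` with degree less than `p`. Then the ideal `(x₁, ..., xₙ)` of `A₀`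
does not admit a divided power structure. -/
theorem no_dividedPowers_of_monomials (p : ℕ) (hp : p.Prime)
    {k : Type u} [Field k] [CharP k p]
    (n : ℕ) (d₁ d₂ d₃ : Fin n →₀ ℕ) (c₁ c₂ c₃ : k)
    (hc₁ : c₁ ≠ 0) (hc₂ : c₂ ≠ 0) (hc₃ : c₃ ≠ 0)
    (hd₁₂ : d₁ ≠ d₂) (hd₁₃ : d₁ ≠ d₃) (hd₂₃ : d₂ ≠ d₃)
    (hdeg₁ : 2 ≤ d₁.sum fun _ e => e) (hdeg₂ : 2 ≤ d₂.sum fun _ e => e)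
    (hdeg₃ : 2 ≤ d₃.sum fun _ e => e)
    (hvar : ∀ a : Fin n, d₁ a + (p - 1) * (d₂ a + d₃ a) < p)
    (f₀ : MvPolynomial (Fin n) k)
    (hf₀ : f₀ = MvPolynomial.monomial d₁ c₁ + MvPolynomial.monomial d₂ c₂ +
      MvPolynomial.monomial d₃ c₃)
    (K : Ideal (MvPolynomial (Fin n) k))
    (hK : K = Ideal.span ((Set.range fun a => MvPolynomial.X a ^ p) ∪ {f₀})) :
    ¬ Nonempty (DividedPowers
      ((Ideal.span (Set.range MvPolynomial.X)).map (Ideal.Quotient.mk K))) :=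
  no_dividedPowers_of_monomials_general p hp n d₁ d₂ d₃ c₁ c₂ c₃ hc₁ hc₂ hc₃ hdeg₁ hdeg₂ hdeg₃ hvar
    f₀ hf₀ K hK
end
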